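/- arXiv:1108.2005 — 6 statements merged into one kernel-verified Lean document; each statement's English description precedes it below -/
import Mathlib

section
/- Let k₁ and k₂ be relatively prime positive integers. The set H = { (U(a, b, c + k₂t), diag(e^{-2πik₁t}, e^{2πik₁t})) : a, b, c ∈ ℤ, t ∈ ℝ } is a closed subgroup of the product topological group H³(ℝ) × SU(2). -/
/-!
`H` is the image of the homomorphism `Heis ℤ × ℝ → H³(ℝ) × SU(2)`,
`(U(a,b,c), t) ↦ (U(a, b, c + k₂t), diag(e^{-2πik₁t}, e^{2πik₁t}))`, hence a subgroup.
For closedness, Bézout (`k₁u + k₂v = 1`) shows that `(U(x,y,z), g)` lies in `H` exactly when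
`x, y ∈ ℤ` and `g = diag(e^{-2πiθ}, e^{2πiθ})` for some `θ ∈ (k₁z + ℤ)/k₂`; by periodicity only
`k₂` shifts matter, so the condition on `g` is a finite union of closed equations.
-/

/-- The Heisenberg group over a commutative ring `R`: elements `U(x,y,z)` (upper unitriangular
3×3 matrices `[[1,x,z],[0,1,y],[0,0,1]]`) with the matrix multiplication law
`U(x,y,z)·U(x',y',z') = U(x+x', y+y', z+z'+x·y')`. -/
@[ext]
structure Heis (R : Type*) [CommRing R] where
  x : R
  y : R
  z : R

namespace Heis

variable {R : Type*} [CommRing R]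

instance : Mul (Heis R) := ⟨fun a b => ⟨a.x + b.x, a.y + b.y, a.z + b.z + a.x * b.y⟩⟩
instance : One (Heis R) := ⟨⟨0, 0, 0⟩⟩
instance : Inv (Heis R) := ⟨fun a => ⟨-a.x, -a.y, -a.z + a.x * a.y⟩⟩

@[simp] theorem mul_x (a b : Heis R) : (a * b).x = a.x + b.x := rfl
@[simp] theorem mul_y (a b : Heis R) : (a * b).y = a.y + b.y := rfl
@[simp] theorem mul_z (a b : Heis R) : (a * b).z = a.z + b.z + a.x * b.y := rfl
@[simp] theorem one_x : (1 : Heis R).x = 0 := rfl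
@[simp] theorem one_y : (1 : Heis R).y = 0 := rfl
@[simp] theorem one_z : (1 : Heis R).z = 0 := rfl
@[simp] theorem inv_x (a : Heis R) : (a⁻¹).x = -a.x := rfl
@[simp] theorem inv_y (a : Heis R) : (a⁻¹).y = -a.y := rfl
@[simp] theorem inv_z (a : Heis R) : (a⁻¹).z = -a.z + a.x * a.y := rfl

instance : Group (Heis R) where
  mul := (· * ·)
  one := 1
  inv := (·⁻¹)
  mul_assoc a b c := by ext <;> simp <;> ring
  one_mul a := by ext <;> simp
  mul_one a := by ext <;> simp
  inv_mul_cancel a := by ext <;> simp <;> ring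

@[simp] theorem mk_mul (a b c a' b' c' : R) :
    (⟨a, b, c⟩ * ⟨a', b', c'⟩ : Heis R) = ⟨a + a', b + b', c + c' + a * b'⟩ := rfl

theorem one_def : (1 : Heis R) = ⟨0, 0, 0⟩ := rfl

@[simp] theorem mk_inv (a b c : R) : (⟨a, b, c⟩ : Heis R)⁻¹ = ⟨-a, -b, -c + a * b⟩ := rfl

end Heis

/-- The standard topology on `H³(ℝ)`, i.e. the topology induced from the space of
3×3 real matrices (equivalently, from the matrix entries `(x, y, z)`). -/
instance : TopologicalSpace (Heis ℝ) :=
  TopologicalSpace.induced (fun h => (h.x, h.y, h.z)) inferInstance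

/-- `SU(2)`: the group of 2×2 complex special unitary matrices (unitary matrices of
determinant 1), as a subgroup of the unitary group. -/
def SU2 : Subgroup (Matrix.unitaryGroup (Fin 2) ℂ) where
  carrier := {A | (A : Matrix (Fin 2) (Fin 2) ℂ).det = 1}
  one_mem' := by simp
  mul_mem' {a b} ha hb := by
    simp only [Set.mem_setOf_eq, Matrix.UnitaryGroup.mul_val, Matrix.det_mul] at *
    rw [ha, hb, mul_one]
  inv_mem' {a} ha := by
    simp only [Set.mem_setOf_eq, Matrix.UnitaryGroup.inv_val] at *
    show (star (a : Matrix (Fin 2) (Fin 2) ℂ)).det = 1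
    rw [Matrix.star_eq_conjTranspose, Matrix.det_conjTranspose, ha, star_one]

/-- The element `diag(e^{-iθ}, e^{iθ})` of `SU(2)`. -/
noncomputable def su2diag (θ : ℝ) : SU2 := by
  refine ⟨⟨Matrix.diagonal
      ![Complex.exp (-(θ : ℂ) * Complex.I), Complex.exp ((θ : ℂ) * Complex.I)], ?_⟩, ?_⟩
  · rw [Matrix.mem_unitaryGroup_iff, Matrix.star_eq_conjTranspose,
      Matrix.diagonal_conjTranspose, Matrix.diagonal_mul_diagonal]
    have hv : (fun i => ![Complex.exp (-(θ : ℂ) * Complex.I), Complex.exp ((θ : ℂ) * Complex.I)] i *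
        star ![Complex.exp (-(θ : ℂ) * Complex.I), Complex.exp ((θ : ℂ) * Complex.I)] i) =
        (1 : Fin 2 → ℂ) := by
      funext i
      fin_cases i <;>
        simp [Complex.star_def, ← Complex.exp_conj, ← Complex.exp_add]
    rw [hv]
    exact Matrix.diagonal_one
  · show (Matrix.diagonal _).det = 1
    rw [Matrix.det_diagonal, Fin.prod_univ_two]
    simp only [Matrix.cons_val_zero, Matrix.cons_val_one, Matrix.head_cons, ← Complex.exp_add]
    ring_nf
    exact Complex.exp_zero

/-- The subset `H = { (U(a,b,c+k₂t), diag(e^{-2πik₁t}, e^{2πik₁t})) : a,b,c ∈ ℤ, t ∈ ℝ }`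
of `H³(ℝ) × SU(2)`. -/
noncomputable def Hset (k₁ k₂ : ℕ) : Set (Heis ℝ × SU2) :=
  {p | ∃ (a b c : ℤ) (t : ℝ),
    p = (⟨(a : ℝ), (b : ℝ), (c : ℝ) + (k₂ : ℝ) * t⟩, su2diag (2 * Real.pi * (k₁ : ℝ) * t))}

open Real Function

theorem su2diag_add (θ ψ : ℝ) : su2diag (θ + ψ) = su2diag θ * su2diag ψ := by
  refine Subtype.ext (Subtype.ext ?_)
  show Matrix.diagonal _ = Matrix.diagonal _ * Matrix.diagonal _
  rw [Matrix.diagonal_mul_diagonal]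
  ext i j
  fin_cases i <;> fin_cases j <;> simp [← Complex.exp_add] <;> ring_nf

theorem su2diag_zero : su2diag 0 = 1 := by
  simpa using su2diag_add 0 0

theorem su2diag_two_pi : su2diag (2 * π) = 1 := by
  refine Subtype.ext (Subtype.ext ?_)
  show Matrix.diagonal _ = 1
  ext i j
  fin_cases i <;> fin_cases j <;> simp [Complex.exp_neg]

theorem continuous_su2diag : Continuous su2diag := by
  refine .subtype_mk (.subtype_mk (continuous_matrix fun i j => ?_) _) _
  fin_cases i <;> fin_cases j <;> simp <;> fun_prop

theorem periodic_su2diag_two_pi_mul : Periodic (fun s => su2diag (2 * π * s)) 1 := fun s => by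
  dsimp only
  rw [mul_add, mul_one, su2diag_add, su2diag_two_pi, mul_one]

namespace Heis

theorem continuous_coords : Continuous fun h : Heis ℝ => (h.x, h.y, h.z) :=
  continuous_induced_dom

theorem continuous_x : Continuous fun h : Heis ℝ => h.x :=
  continuous_fst.comp continuous_coords

theorem continuous_y : Continuous fun h : Heis ℝ => h.y :=
  (continuous_fst.comp continuous_snd).comp continuous_coords

theorem continuous_z : Continuous fun h : Heis ℝ => h.z :=
  (continuous_snd.comp continuous_snd).comp continuous_coords

end Heis

/-- A homomorphism because `U(0, 0, k₂t)` is central. -/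
noncomputable def hsetParam (k₁ k₂ : ℕ) : Heis ℤ × Multiplicative ℝ →* Heis ℝ × SU2 where
  toFun p := (⟨p.1.x, p.1.y, p.1.z + k₂ * p.2.toAdd⟩, su2diag (2 * π * k₁ * p.2.toAdd))
  map_one' := by
    ext <;> simp [su2diag_zero, Heis.one_def]
  map_mul' p q := by
    refine Prod.ext (Heis.ext ?_ ?_ ?_) ?_
    · simp
    · simp
    · simp; ring
    · simp [← su2diag_add, mul_add]

theorem range_hsetParam (k₁ k₂ : ℕ) : Set.range (hsetParam k₁ k₂) = Hset k₁ k₂ := by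
  ext p
  constructor
  · rintro ⟨⟨⟨a, b, c⟩, t⟩, rfl⟩
    exact ⟨a, b, c, t.toAdd, rfl⟩
  · rintro ⟨a, b, c, t, rfl⟩
    exact ⟨(⟨a, b, c⟩, .ofAdd t), rfl⟩

theorem exists_int_add_mul_iff_of_coprime {α : Type*} {f : ℝ → α} (hf : Periodic f 1)
    {k₁ k₂ : ℕ} (hk₂ : k₂ ≠ 0) (hcop : k₁.Coprime k₂) (z : ℝ) (y : α) :
    (∃ (c : ℤ) (t : ℝ), z = c + k₂ * t ∧ y = f (k₁ * t)) ↔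
      ∃ m : ℤ, y = f ((k₁ * z + m) / k₂) := by
  have hk₂R : (k₂ : ℝ) ≠ 0 := by exact_mod_cast hk₂
  constructor
  · rintro ⟨c, t, rfl, rfl⟩
    refine ⟨-(k₁ * c), congrArg f ?_⟩
    push_cast
    field_simp
    ring
  · rintro ⟨m, rfl⟩
    obtain ⟨u, v, huv⟩ := Nat.isCoprime_iff_coprime.mpr hcop
    -- Bézout: `m = k₁ (m u) + k₂ (m v)`; take `c := -m u`, periodicity absorbs the shift `m v`.
    have hbezout : (k₁ : ℝ) * (m * u) + k₂ * (m * v) = m := by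
      exact_mod_cast congrArg (fun n : ℤ => (n : ℝ)) (by linear_combination (m : ℤ) * huv)
    refine ⟨-(m * u), (z + m * u) / k₂, by push_cast; field_simp; ring, ?_⟩
    rw [← hf.int_mul (m * v) (k₁ * _)]
    congr 1
    push_cast
    field_simp
    linear_combination -hbezout

theorem isClosed_setOf_exists_int {X Y : Type*} [TopologicalSpace X] [TopologicalSpace Y]
    [T2Space Y] {f : ℝ → Y} (hf : Continuous f) (hper : Periodic f 1) {k : ℕ} (hk : k ≠ 0)
    {g : X → Y} {θ : X → ℝ} (hg : Continuous g) (hθ : Continuous θ) :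
    IsClosed {x | ∃ m : ℤ, g x = f ((θ x + m) / k)} := by
  have hkR : (k : ℝ) ≠ 0 := by exact_mod_cast hk
  have hfinite : {x | ∃ m : ℤ, g x = f ((θ x + m) / k)} =
      ⋃ m ∈ Set.Ico (0 : ℤ) k, {x | g x = f ((θ x + m) / k)} := by
    ext x
    simp only [Set.mem_ofPred_eq, Set.mem_iUnion, exists_prop]
    constructor
    · rintro ⟨m, hm⟩
      refine ⟨m % k, ⟨Int.emod_nonneg _ (by omega), Int.emod_lt_of_pos _ (by omega)⟩, ?_⟩
      have hdiv : (m : ℝ) = (m % k : ℤ) + k * (m / k : ℤ) := by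
        exact_mod_cast (Int.emod_add_mul_ediv m k).symm
      rw [hm, ← hper.int_mul (m / k) ((θ x + (m % k : ℤ)) / k)]
      congr 1
      rw [hdiv]
      field_simp
      ring
    · rintro ⟨m, -, hm⟩
      exact ⟨m, hm⟩
  rw [hfinite]
  exact (Set.finite_Ico _ _).isClosed_biUnion fun m _ =>
    isClosed_eq hg (hf.comp ((hθ.add continuous_const).div_const _))

theorem Hset_eq_setOf {k₁ k₂ : ℕ} (hk₂ : k₂ ≠ 0) (hcop : k₁.Coprime k₂) :
    Hset k₁ k₂ = {p | p.1.x ∈ Set.range ((↑) : ℤ → ℝ) ∧ p.1.y ∈ Set.range ((↑) : ℤ → ℝ) ∧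
      ∃ m : ℤ, p.2 = su2diag (2 * π * ((k₁ * p.1.z + m) / k₂))} := by
  ext ⟨⟨x, y, z⟩, g⟩
  simp only [Set.mem_ofPred_eq,
    ← exists_int_add_mul_iff_of_coprime periodic_su2diag_two_pi_mul hk₂ hcop z g]
  simp only [Hset, Set.mem_ofPred_eq, Prod.mk.injEq, Heis.mk.injEq, mul_assoc]
  constructor
  · rintro ⟨a, b, c, t, ⟨rfl, rfl, rfl⟩, rfl⟩
    exact ⟨⟨a, rfl⟩, ⟨b, rfl⟩, c, t, rfl, rfl⟩
  · rintro ⟨⟨a, rfl⟩, ⟨b, rfl⟩, c, t, rfl, rfl⟩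
    exact ⟨a, b, c, t, ⟨rfl, rfl, rfl⟩, rfl⟩

theorem isClosed_Hset {k₁ k₂ : ℕ} (hk₂ : k₂ ≠ 0) (hcop : k₁.Coprime k₂) :
    IsClosed (Hset k₁ k₂) := by
  have hZ : IsClosed (Set.range ((↑) : ℤ → ℝ)) := Int.isClosedEmbedding_coe_real.isClosed_range
  rw [Hset_eq_setOf hk₂ hcop]
  refine (hZ.preimage (Heis.continuous_x.comp continuous_fst)).inter
    ((hZ.preimage (Heis.continuous_y.comp continuous_fst)).inter ?_)
  exact isClosed_setOf_exists_int (continuous_su2diag.comp (continuous_const_mul _))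
    periodic_su2diag_two_pi_mul hk₂ continuous_snd
    (continuous_const.mul (Heis.continuous_z.comp continuous_fst))

theorem Hset_isClosed_subgroup_general (k₁ k₂ : ℕ) (hk₂ : 0 < k₂)
    (hcop : Nat.Coprime k₁ k₂) :
    ∃ H : Subgroup (Heis ℝ × SU2),
      (H : Set (Heis ℝ × SU2)) = Hset k₁ k₂ ∧ IsClosed (H : Set (Heis ℝ × SU2)) := by
  have hH : ((hsetParam k₁ k₂).range : Set (Heis ℝ × SU2)) = Hset k₁ k₂ := by
    rw [MonoidHom.coe_range, range_hsetParam]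
  exact ⟨(hsetParam k₁ k₂).range, hH, hH ▸ isClosed_Hset hk₂.ne' hcop⟩

/-- Let `k₁, k₂` be relatively prime positive integers. The set
`H = { (U(a,b,c+k₂t), diag(e^{-2πik₁t}, e^{2πik₁t})) : a,b,c ∈ ℤ, t ∈ ℝ }` is a closed
subgroup of the product topological group `H³(ℝ) × SU(2)`. -/
theorem Hset_isClosed_subgroup (k₁ k₂ : ℕ) (hk₁ : 0 < k₁) (hk₂ : 0 < k₂)
    (hcop : Nat.Coprime k₁ k₂) :
    ∃ H : Subgroup (Heis ℝ × SU2),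
      (H : Set (Heis ℝ × SU2)) = Hset k₁ k₂ ∧ IsClosed (H : Set (Heis ℝ × SU2)) :=
  Hset_isClosed_subgroup_general k₁ k₂ hk₂ hcop
end

section
/- Let k₁ and k₂ be relatively prime positive integers and let ψ : H³(ℤ) × ℝ → H³(ℝ) × SU(2) be the group homomorphism ψ(N, t) = (N · U(0, 0, k₂t), diag(e^{-2πik₁t}, e^{2πik₁t})). Then the kernel of ψ equals { (U(0, 0, k₂e), -e) : e ∈ ℤ }, and this kernel is an infinite cyclic group (isomorphic to ℤ). -/
namespace Heis

/-- The inclusion of the integer Heisenberg group `H³(ℤ)` into `H³(ℝ)`. -/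
def castHom : Heis ℤ →* Heis ℝ where
  toFun N := ⟨(N.x : ℝ), (N.y : ℝ), (N.z : ℝ)⟩
  map_one' := by ext <;> simp
  map_mul' a b := by ext <;> simp

end Heis

lemma su2diag_eq_one_iff (θ : ℝ) : su2diag θ = 1 ↔ ∃ n : ℤ, θ = n * (2 * Real.pi) := by
  constructor
  · intro h
    have h1 : Complex.exp ((θ : ℂ) * Complex.I) = 1 := by
      have := congrArg (fun A : SU2 =>
        ((A : Matrix.unitaryGroup (Fin 2) ℂ) : Matrix (Fin 2) (Fin 2) ℂ) 1 1) h
      simpa [su2diag, Matrix.diagonal] using this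
    rw [Complex.exp_eq_one_iff] at h1
    obtain ⟨n, hn⟩ := h1
    refine ⟨n, ?_⟩
    have h2 : (θ : ℂ) * Complex.I = ((n : ℝ) * (2 * Real.pi) : ℝ) * Complex.I := by
      rw [hn]; push_cast; ring
    have := mul_right_cancel₀ Complex.I_ne_zero h2
    exact_mod_cast this
  · rintro ⟨n, rfl⟩
    have e1 : Complex.exp (-((((n : ℝ) * (2 * Real.pi) : ℝ)) : ℂ) * Complex.I) = 1 := by
      rw [← Complex.exp_int_mul_two_pi_mul_I (-n)]; congr 1; push_cast; ring
    have e2 : Complex.exp (((((n : ℝ) * (2 * Real.pi) : ℝ)) : ℂ) * Complex.I) = 1 := by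
      rw [← Complex.exp_int_mul_two_pi_mul_I n]; congr 1; push_cast; ring
    have hv : (![(1 : ℂ), 1] : Fin 2 → ℂ) = 1 := by
      funext i; fin_cases i <;> rfl
    apply Subtype.ext
    apply Subtype.ext
    show Matrix.diagonal _ = 1
    rw [e1, e2, hv]; exact Matrix.diagonal_one

/-- Let `k₁, k₂` be relatively prime positive integers and let `ψ : H³(ℤ) × ℝ → H³(ℝ) × SU(2)`
be the group homomorphism `ψ(N,t) = (N · U(0,0,k₂t), diag(e^{-2πik₁t}, e^{2πik₁t}))`. Then
`ker ψ = { (U(0,0,k₂e), -e) : e ∈ ℤ }`, and this kernel is infinite cyclic (isomorphic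
to `ℤ`). -/
theorem psi_ker (k₁ k₂ : ℕ) (hk₁ : 0 < k₁) (hk₂ : 0 < k₂) (hcop : Nat.Coprime k₁ k₂)
    (ψ : Heis ℤ × Multiplicative ℝ →* Heis ℝ × SU2)
    (hψ : ∀ (N : Heis ℤ) (t : ℝ),
      ψ (N, Multiplicative.ofAdd t) =
        (Heis.castHom N * ⟨0, 0, (k₂ : ℝ) * t⟩, su2diag (2 * Real.pi * (k₁ : ℝ) * t))) :
    (ψ.ker : Set (Heis ℤ × Multiplicative ℝ)) =
      {p | ∃ e : ℤ, p = (⟨0, 0, (k₂ : ℤ) * e⟩, Multiplicative.ofAdd (-(e : ℝ)))} ∧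
    Nonempty (ψ.ker ≃* Multiplicative ℤ) := by
  have two_pi_ne : (2 * Real.pi : ℝ) ≠ 0 := by positivity
  have hker : ∀ p : Heis ℤ × Multiplicative ℝ, p ∈ ψ.ker ↔
      ∃ e : ℤ, p = (⟨0, 0, (k₂ : ℤ) * e⟩, Multiplicative.ofAdd (-(e : ℝ))) := by
    rintro ⟨N, t⟩
    constructor
    · intro h
      rw [MonoidHom.mem_ker] at h
      have h' := h
      rw [show t = Multiplicative.ofAdd t.toAdd from rfl, hψ] at h'
      set s : ℝ := t.toAdd with hs
      rw [Prod.ext_iff] at h'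
      obtain ⟨hH, hS⟩ := h'
      rw [Heis.ext_iff] at hH
      obtain ⟨hx, hy, hz⟩ := hH
      simp [Heis.castHom] at hx hy hz
      replace hS : su2diag (2 * Real.pi * (k₁ : ℝ) * s) = 1 := hS
      rw [su2diag_eq_one_iff] at hS
      obtain ⟨n, hn⟩ := hS
      -- hn : 2π * k₁ * s = n * 2π, so k₁ * s = n
      have hk1s : (k₁ : ℝ) * s = n := by
        have h2 : (2 * Real.pi) * ((k₁ : ℝ) * s) = (2 * Real.pi) * (n : ℝ) := by
          linear_combination hn
        exact mul_left_cancel₀ two_pi_ne h2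
      -- hz : (N.z : ℝ) = -(k₂ * s) (or similar); derive k₂ * s = -N.z
      have hk2s : (k₂ : ℝ) * s = -(N.z : ℝ) := by linarith [hz]
      have hint : (k₂ : ℤ) * n = -((k₁ : ℤ) * N.z) := by
        have : ((k₂ : ℤ) * n : ℝ) = (-((k₁ : ℤ) * N.z) : ℝ) := by
          push_cast
          calc (k₂ : ℝ) * n = (k₁ : ℝ) * ((k₂ : ℝ) * s) := by rw [← hk1s]; ring
          _ = -((k₁ : ℝ) * N.z) := by rw [hk2s]; ring
        exact_mod_cast this
      have hdvd : (k₂ : ℤ) ∣ N.z := by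
        have h1 : (k₂ : ℤ) ∣ (k₁ : ℤ) * N.z := ⟨-n, by linarith [hint]⟩
        have hco : IsCoprime (k₂ : ℤ) (k₁ : ℤ) := by
          rw [Int.isCoprime_iff_gcd_eq_one]
          exact_mod_cast hcop.symm
        exact hco.dvd_of_dvd_mul_left h1
      obtain ⟨e, he⟩ := hdvd
      refine ⟨e, ?_⟩
      have hse : s = -(e : ℝ) := by
        have : (k₂ : ℝ) * s = (k₂ : ℝ) * (-(e : ℝ)) := by
          rw [hk2s, he]; push_cast; ring
        exact mul_left_cancel₀ (by exact_mod_cast hk₂.ne' : (k₂ : ℝ) ≠ 0) this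
      have hN : N = (⟨0, 0, (k₂ : ℤ) * e⟩ : Heis ℤ) := by
        ext
        · exact_mod_cast hx
        · exact_mod_cast hy
        · exact he
      rw [Prod.ext_iff]
      exact ⟨hN, by rw [show t = Multiplicative.ofAdd s from rfl, hse]⟩
    · rintro ⟨e, he⟩
      rw [he, MonoidHom.mem_ker, hψ, Prod.ext_iff]
      constructor
      · show Heis.castHom _ * _ = 1
        ext <;> simp [Heis.castHom, Heis.one_def]
      · show su2diag _ = 1
        rw [su2diag_eq_one_iff]
        exact ⟨-(k₁ : ℤ) * e, by push_cast; ring⟩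
  constructor
  · ext p
    exact hker p
  · -- build the isomorphism
    have hmem : ∀ e : ℤ, ((⟨0, 0, (k₂ : ℤ) * e⟩, Multiplicative.ofAdd (-(e : ℝ))) :
        Heis ℤ × Multiplicative ℝ) ∈ ψ.ker := fun e => (hker _).2 ⟨e, rfl⟩
    let g : Multiplicative ℤ →* ψ.ker :=
      { toFun := fun e => ⟨(⟨0, 0, (k₂ : ℤ) * e.toAdd⟩,
          Multiplicative.ofAdd (-(e.toAdd : ℝ))), hmem _⟩
        map_one' := by
          apply Subtype.ext
          rw [Prod.ext_iff]
          constructor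
          · ext <;> simp [Heis.one_def]
          · show Multiplicative.ofAdd _ = _
            simp
        map_mul' := fun a b => by
          apply Subtype.ext
          rw [Prod.ext_iff]
          constructor
          · show (⟨0, 0, (k₂ : ℤ) * (a.toAdd + b.toAdd)⟩ : Heis ℤ) = _
            ext <;> simp <;> ring
          · show Multiplicative.ofAdd (-((a.toAdd + b.toAdd : ℤ) : ℝ)) =
                Multiplicative.ofAdd (-(a.toAdd : ℝ)) * Multiplicative.ofAdd (-(b.toAdd : ℝ))
            rw [← ofAdd_add]
            congr 1
            push_cast
            ring }
    have hbij : Function.Bijective g := by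
      constructor
      · intro a b hab
        have := congrArg (fun x : ψ.ker => (x : Heis ℤ × Multiplicative ℝ).2.toAdd) hab
        simp only [g] at this
        have h2 : -((a.toAdd : ℤ) : ℝ) = -((b.toAdd : ℤ) : ℝ) := this
        have : (a.toAdd : ℤ) = b.toAdd := by exact_mod_cast neg_injective h2
        exact this
      · rintro ⟨p, hp⟩
        obtain ⟨e, rfl⟩ := (hker p).1 hp
        exact ⟨Multiplicative.ofAdd e, rfl⟩
    exact ⟨(MulEquiv.ofBijective g hbij).symm⟩
end

section
/- Let k₁ and k₂ be relatively prime positive integers, let ψ : H³(ℤ) × ℝ → H³(ℝ) × SU(2) be the group homomorphism ψ(N, t) = (N · U(0, 0, k₂t), diag(e^{-2πik₁t}, e^{2πik₁t})), and let H be the image of ψ. Then ψ(H³(ℤ) × {0}) = { (N, I) : N ∈ H³(ℤ) } is a normal subgroup of H, and the quotient group H / ψ(H³(ℤ) × {0}) is isomorphic to the circle group ℝ/ℤ. -/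
/-- Let `ψ : H³(ℤ) × ℝ → H³(ℝ) × SU(2)` be the homomorphism
`ψ(N,t) = (N · U(0,0,k₂t), diag(e^{-2πik₁t}, e^{2πik₁t}))` and let `H` be its image. Then
`ψ(H³(ℤ) × {0}) = { (N, I) : N ∈ H³(ℤ) }` is a normal subgroup of `H`, and the quotient
`H / ψ(H³(ℤ) × {0})` is isomorphic to the circle group `ℝ/ℤ`. -/
theorem psi_quotient_circle (k₁ k₂ : ℕ) (hk₁ : 0 < k₁) (hk₂ : 0 < k₂)
    (hcop : Nat.Coprime k₁ k₂)
    (ψ : Heis ℤ × Multiplicative ℝ →* Heis ℝ × SU2)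
    (hψ : ∀ (N : Heis ℤ) (t : ℝ),
      ψ (N, Multiplicative.ofAdd t) =
        (Heis.castHom N * ⟨0, 0, (k₂ : ℝ) * t⟩, su2diag (2 * Real.pi * (k₁ : ℝ) * t))) :
    ((Subgroup.map ψ ((⊤ : Subgroup (Heis ℤ)).prod
        (⊥ : Subgroup (Multiplicative ℝ)))) : Set (Heis ℝ × SU2)) =
      {p | ∃ N : Heis ℤ, p = (Heis.castHom N, 1)} ∧
    ∃ _ : ((Subgroup.map ψ ((⊤ : Subgroup (Heis ℤ)).prod
        (⊥ : Subgroup (Multiplicative ℝ)))).subgroupOf ψ.range).Normal,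
      Nonempty ((ψ.range ⧸ (Subgroup.map ψ ((⊤ : Subgroup (Heis ℤ)).prod
        (⊥ : Subgroup (Multiplicative ℝ)))).subgroupOf ψ.range) ≃*
          Multiplicative (AddCircle (1 : ℝ))) := by
  have hpi : Real.pi ≠ 0 := Real.pi_ne_zero
  set K := Subgroup.map ψ ((⊤ : Subgroup (Heis ℤ)).prod (⊥ : Subgroup (Multiplicative ℝ)))
    with hKdef
  -- every `ψ (N, ofAdd n)` with integer `n` lands in the "integer" pairs
  have hψint : ∀ (N : Heis ℤ) (n : ℤ), ψ (N, Multiplicative.ofAdd (n : ℝ)) =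
      (Heis.castHom (⟨N.x, N.y, N.z + (k₂ : ℤ) * n⟩ : Heis ℤ), 1) := by
    intro N n
    rw [hψ]
    refine Prod.ext ?_ ?_
    · show _ = Heis.castHom _
      ext <;> simp [Heis.castHom] <;> push_cast <;> ring
    · show su2diag _ = 1
      rw [su2diag_eq_one_iff]
      exact ⟨(k₁ : ℤ) * n, by push_cast; ring⟩
  have hK : (K : Set (Heis ℝ × SU2)) = {p | ∃ N : Heis ℤ, p = (Heis.castHom N, 1)} := by
    ext p
    simp only [hKdef, SetLike.mem_coe, Subgroup.mem_map, Subgroup.mem_prod, Subgroup.mem_top,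
      Subgroup.mem_bot, true_and, Set.mem_setOf_eq]
    constructor
    · rintro ⟨⟨N, t⟩, ht, rfl⟩
      dsimp at ht
      subst ht
      have : (1 : Multiplicative ℝ) = Multiplicative.ofAdd ((0 : ℤ) : ℝ) := by
        simp
      rw [this, hψint]
      exact ⟨_, rfl⟩
    · rintro ⟨N, rfl⟩
      refine ⟨(⟨N.x, N.y, N.z⟩, Multiplicative.ofAdd ((0 : ℤ) : ℝ)), by simp, ?_⟩
      rw [hψint]
      congr 2 <;> simp
  refine ⟨hK, ?_⟩
  -- membership characterization
  have hKmem : ∀ (N : Heis ℤ) (t : ℝ),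
      ψ (N, Multiplicative.ofAdd t) ∈ K ↔ ∃ n : ℤ, t = n := by
    intro N t
    constructor
    · intro hmem
      have hmem' : ψ (N, Multiplicative.ofAdd t) ∈ (K : Set (Heis ℝ × SU2)) := hmem
      rw [hK] at hmem'
      obtain ⟨M, hM⟩ := hmem'
      rw [hψ] at hM
      have h1 := congrArg Prod.fst hM
      have h2 := congrArg Prod.snd hM
      dsimp at h1 h2
      rw [su2diag_eq_one_iff] at h2
      obtain ⟨n, hn⟩ := h2
      have hk1t : (k₁ : ℝ) * t = n := by
        have h2pi : (2 : ℝ) * Real.pi ≠ 0 := by positivity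
        have h3 : (k₁ : ℝ) * t * (2 * Real.pi) = n * (2 * Real.pi) := by linear_combination hn
        exact mul_right_cancel₀ h2pi h3
      have hzcoord := congrArg Heis.z h1
      simp [Heis.castHom] at hzcoord
      have hk2t : (k₂ : ℝ) * t = (M.z - N.z : ℤ) := by push_cast; linarith
      have hco : IsCoprime (k₁ : ℤ) (k₂ : ℤ) := by
        rw [Int.isCoprime_iff_gcd_eq_one]
        exact_mod_cast hcop
      obtain ⟨u, v, huv⟩ := hco
      refine ⟨u * n + v * (M.z - N.z), ?_⟩
      have huv' : (u : ℝ) * k₁ + v * k₂ = 1 := by exact_mod_cast congrArg (Int.cast : ℤ → ℝ) huv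
      push_cast at hk2t ⊢
      linear_combination (u : ℝ) * hk1t + (v : ℝ) * hk2t - t * huv'
    · rintro ⟨n, rfl⟩
      rw [hψint]
      have : ((Heis.castHom (⟨N.x, N.y, N.z + (k₂ : ℤ) * n⟩ : Heis ℤ), 1) : Heis ℝ × SU2) ∈
          (K : Set (Heis ℝ × SU2)) := by
        rw [hK]; exact ⟨_, rfl⟩
      exact this
  -- normality
  have hconj : ∀ x ∈ K, ∀ y ∈ ψ.range, y * x * y⁻¹ ∈ K := by
    intro x hx y hy
    have hx' : x ∈ (K : Set (Heis ℝ × SU2)) := hx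
    rw [hK] at hx'
    obtain ⟨M, rfl⟩ := hx'
    obtain ⟨⟨N, τ⟩, hyy⟩ := hy
    have hy' : y = ψ (N, Multiplicative.ofAdd τ.toAdd) := hyy.symm
    rw [hy']
    show _ ∈ (K : Set (Heis ℝ × SU2))
    rw [hK, hψ]
    refine ⟨⟨M.x, M.y, M.z + N.x * M.y - M.x * N.y⟩, ?_⟩
    refine Prod.ext ?_ ?_
    · show _ = Heis.castHom _
      ext <;> simp [Heis.castHom] <;> push_cast <;> ring
    · show _ * 1 * _ = 1
      simp
  have hnormal : ((K.subgroupOf ψ.range)).Normal := by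
    constructor
    intro k hk h
    rw [Subgroup.mem_subgroupOf] at hk ⊢
    have : ((h * k * h⁻¹ : ψ.range) : Heis ℝ × SU2) = ↑h * ↑k * (↑h)⁻¹ := rfl
    rw [this]
    exact hconj _ hk _ h.2
  refine ⟨hnormal, ?_⟩
  haveI := hnormal
  let F : Heis ℤ × Multiplicative ℝ →* Multiplicative (AddCircle (1 : ℝ)) :=
    (AddMonoidHom.toMultiplicative
      (QuotientAddGroup.mk' (AddSubgroup.zmultiples (1 : ℝ)))).comp
      (MonoidHom.snd (Heis ℤ) (Multiplicative ℝ))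
  let G : Heis ℤ × Multiplicative ℝ →* (ψ.range ⧸ K.subgroupOf ψ.range) :=
    (QuotientGroup.mk' (K.subgroupOf ψ.range)).comp ψ.rangeRestrict
  have hFsurj : Function.Surjective F := by
    intro q
    obtain ⟨t, ht⟩ := QuotientAddGroup.mk'_surjective (AddSubgroup.zmultiples (1 : ℝ)) q.toAdd
    refine ⟨(1, Multiplicative.ofAdd t), ?_⟩
    show Multiplicative.ofAdd ((QuotientAddGroup.mk' (AddSubgroup.zmultiples (1 : ℝ))) t) = q
    rw [ht]
    exact ofAdd_toAdd q
  have hGsurj : Function.Surjective G :=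
    (QuotientGroup.mk'_surjective (K.subgroupOf ψ.range)).comp ψ.rangeRestrict_surjective
  have hGker : ∀ p : Heis ℤ × Multiplicative ℝ, G p = 1 ↔ ∃ n : ℤ, p.2.toAdd = (n : ℝ) := by
    rintro ⟨N, τ⟩
    rw [MonoidHom.comp_apply, QuotientGroup.mk'_apply, QuotientGroup.eq_one_iff,
      Subgroup.mem_subgroupOf]
    exact hKmem N τ.toAdd
  have hFker : ∀ p : Heis ℤ × Multiplicative ℝ, F p = 1 ↔ ∃ n : ℤ, p.2.toAdd = (n : ℝ) := by
    rintro ⟨N, τ⟩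
    show Multiplicative.ofAdd ((QuotientAddGroup.mk' (AddSubgroup.zmultiples (1 : ℝ))) τ.toAdd)
      = 1 ↔ _
    rw [show (1 : Multiplicative (AddCircle (1:ℝ))) = Multiplicative.ofAdd 0 from rfl]
    rw [Multiplicative.ofAdd.apply_eq_iff_eq, QuotientAddGroup.mk'_apply,
      QuotientAddGroup.eq_zero_iff, AddSubgroup.mem_zmultiples_iff]
    constructor
    · rintro ⟨n, hn⟩; exact ⟨n, by simpa [eq_comm] using hn⟩
    · rintro ⟨n, hn⟩; exact ⟨n, by simp [hn]⟩
  have hkereq : G.ker = F.ker := by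
    ext p
    rw [MonoidHom.mem_ker, MonoidHom.mem_ker, hGker, hFker]
  exact ⟨((QuotientGroup.quotientKerEquivOfSurjective G hGsurj).symm.trans
      (QuotientGroup.quotientMulEquivOfEq hkereq)).trans
      (QuotientGroup.quotientKerEquivOfSurjective F hFsurj)⟩
end

section
/- Let r be a real number with 0 < r < 1 and define Θ : ℝ → ℝ by Θ(z) = (1 - z²)(2r²z² + r(6 - 2r²)z + (6 - 4r²)) / ((1 + rz) · 2(3 - r²)). Then: (i) Θ(z) > 0 for all z with -1 < z < 1; (ii) Θ(1) = 0 and Θ(-1) = 0; (iii) Θ has derivative -2 at z = 1 and derivative 2 at z = -1. (These are the positivity and smooth-compactification boundary conditions Θ > 0 on (-1,1), Θ(±1) = 0, Θ'(±1) = ∓2 for the extremal Kähler metric profile.) -/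
/-- For `0 < r < 1`, the profile function
`Θ(z) = (1-z²)(2r²z² + r(6-2r²)z + (6-4r²)) / ((1+rz)·2(3-r²))` satisfies the positivity
and smooth-compactification boundary conditions: `Θ > 0` on `(-1,1)`, `Θ(±1) = 0`, and
`Θ'(±1) = ∓2`. -/
theorem extremal_profile_conditions (r : ℝ) (hr0 : 0 < r) (hr1 : r < 1) (Θ : ℝ → ℝ)
    (hΘ : ∀ z : ℝ, Θ z =
      (1 - z ^ 2) * (2 * r ^ 2 * z ^ 2 + r * (6 - 2 * r ^ 2) * z + (6 - 4 * r ^ 2)) /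
        ((1 + r * z) * (2 * (3 - r ^ 2)))) :
    (∀ z : ℝ, -1 < z → z < 1 → 0 < Θ z) ∧
    Θ 1 = 0 ∧
    Θ (-1) = 0 ∧
    HasDerivAt Θ (-2) 1 ∧
    HasDerivAt Θ 2 (-1) := by
  have h3r : (0:ℝ) < 3 - r ^ 2 := by nlinarith
  have hΘfun : Θ = fun z : ℝ =>
      (1 - z ^ 2) * (2 * r ^ 2 * z ^ 2 + r * (6 - 2 * r ^ 2) * z + (6 - 4 * r ^ 2)) /
        ((1 + r * z) * (2 * (3 - r ^ 2))) := funext hΘ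
  have hderiv : ∀ a : ℝ, -1 ≤ a → a ≤ 1 →
      HasDerivAt Θ
        ((((-(2*a)) * (2 * r ^ 2 * a ^ 2 + r * (6 - 2 * r ^ 2) * a + (6 - 4 * r ^ 2))
          + (1 - a ^ 2) * (2 * r ^ 2 * (2*a) + r * (6 - 2 * r ^ 2)))
            * ((1 + r * a) * (2 * (3 - r ^ 2)))
          - (1 - a ^ 2) * (2 * r ^ 2 * a ^ 2 + r * (6 - 2 * r ^ 2) * a + (6 - 4 * r ^ 2))
            * (r * (2 * (3 - r ^ 2)))) / (((1 + r * a) * (2 * (3 - r ^ 2))) ^ 2)) a := by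
    intro a ha1 ha2
    have hden : (0:ℝ) < 1 + r * a := by nlinarith
    have hden0 : ((1 + r * a) * (2 * (3 - r ^ 2))) ≠ 0 := by positivity
    have h1 : HasDerivAt (fun z : ℝ => 1 - z ^ 2) (-(2*a)) a := by
      simpa using ((hasDerivAt_pow 2 a).const_sub 1)
    have h2 : HasDerivAt (fun z : ℝ => 2 * r ^ 2 * z ^ 2 + r * (6 - 2 * r ^ 2) * z + (6 - 4 * r ^ 2))
        (2 * r ^ 2 * (2*a) + r * (6 - 2 * r ^ 2)) a := by
      have ha : HasDerivAt (fun z : ℝ => 2 * r ^ 2 * z ^ 2) (2 * r ^ 2 * (2*a)) a := by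
        simpa using (hasDerivAt_pow 2 a).const_mul (2 * r ^ 2)
      have hb : HasDerivAt (fun z : ℝ => r * (6 - 2 * r ^ 2) * z) (r * (6 - 2 * r ^ 2)) a := by
        simpa using (hasDerivAt_id a).const_mul (r * (6 - 2 * r ^ 2))
      simpa using (ha.add hb).add_const (6 - 4 * r ^ 2)
    have hN := h1.mul h2
    have hD : HasDerivAt (fun z : ℝ => (1 + r * z) * (2 * (3 - r ^ 2)))
        (r * (2 * (3 - r ^ 2))) a := by
      have : HasDerivAt (fun z : ℝ => 1 + r * z) r a := by
        simpa using ((hasDerivAt_id a).const_mul r).const_add 1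
      simpa using this.mul_const (2 * (3 - r ^ 2))
    rw [hΘfun]
    exact hN.div hD hden0
  refine ⟨?_, ?_, ?_, ?_, ?_⟩
  · intro z hz1 hz2
    rw [hΘ]
    have h1 : (0:ℝ) < 1 - z ^ 2 := by nlinarith
    have hden : (0:ℝ) < 1 + r * z := by nlinarith
    have hq : (0:ℝ) < 2 * r ^ 2 * z ^ 2 + r * (6 - 2 * r ^ 2) * z + (6 - 4 * r ^ 2) := by
      have key : (0:ℝ) < r * (z - 1) + 3 - r ^ 2 := by nlinarith
      nlinarith [mul_pos (mul_pos hr0 (show (0:ℝ) < z + 1 by linarith)) key,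
        mul_pos (sub_pos.2 hr1) h3r]
    positivity
  · rw [hΘ]; norm_num
  · rw [hΘ]; norm_num
  · have h := hderiv 1 (by norm_num) le_rfl
    convert h using 1
    have hden : (0:ℝ) < 1 + r := by linarith
    rw [eq_div_iff (by positivity)]
    ring
  · have h := hderiv (-1) (by norm_num) (by norm_num)
    convert h using 1
    have hden : (0:ℝ) < 1 - r := by linarith
    have hden' : (1 + r * (-1)) * (2 * (3 - r ^ 2)) ≠ 0 := by
      have : (0:ℝ) < (1 + r * (-1)) * (2 * (3 - r ^ 2)) := by nlinarith
      linarith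
    rw [eq_div_iff (pow_ne_zero 2 hden')]
    ring
end

section
/- Let r be a real number with 0 < r < 1 and define the polynomial function F : ℝ → ℝ by F(z) = (1 - z²)(2r²z² + r(6 - 2r²)z + (6 - 4r²)) / (2(3 - r²)). Then the second derivative of F vanishes at z = -1/r, i.e. F''(-1/r) = 0. (This is the extremality condition for the admissible Kähler metric determined by Θ(z) = F(z)/(1 + rz).) -/
/-!
Expanded, `F` is a quartic divided by the constant `2(3 - r²)`, so
`F''(z) = (-24r²z² + (12r³ - 36r)z + 12r² - 12) / (2(3 - r²))`; at `z = -1/r` the numerator is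
`-24 + (36 - 12r²) + 12r² - 12 = 0`.
-/

theorem deriv_deriv_quartic {𝕜 : Type*} [NontriviallyNormedField 𝕜] (a b c d e : 𝕜) :
    deriv (deriv fun z : 𝕜 => a * z ^ 4 + b * z ^ 3 + c * z ^ 2 + d * z + e) =
      fun z => 12 * a * z ^ 2 + 6 * b * z + 2 * c := by
  have hderiv : deriv (fun z : 𝕜 => a * z ^ 4 + b * z ^ 3 + c * z ^ 2 + d * z + e) =
      fun z => 4 * a * z ^ 3 + 3 * b * z ^ 2 + 2 * c * z + d := by
    ext z
    exact ((((((hasDerivAt_pow 4 z).const_mul a).add ((hasDerivAt_pow 3 z).const_mul b)).add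
      ((hasDerivAt_pow 2 z).const_mul c)).add ((hasDerivAt_id z).const_mul d)).add_const
      e).deriv.trans (by push_cast; ring)
  rw [hderiv]
  ext z
  exact (((((hasDerivAt_pow 3 z).const_mul (4 * a)).add ((hasDerivAt_pow 2 z).const_mul
    (3 * b))).add ((hasDerivAt_id z).const_mul (2 * c))).add_const d).deriv.trans
    (by push_cast; ring)

theorem deriv_deriv_div_const {𝕜 : Type*} [NontriviallyNormedField 𝕜] (g : 𝕜 → 𝕜) (c : 𝕜) :
    deriv (deriv fun z => g z / c) = fun z => deriv (deriv g) z / c := by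
  have hderiv : deriv (fun z => g z / c) = fun z => deriv g z / c :=
    funext fun _ => deriv_div_const c
  rw [hderiv]
  exact funext fun _ => deriv_div_const c

theorem extremal_condition_F_general (r : ℝ) (hr0 : 0 < r) (F : ℝ → ℝ)
    (hF : ∀ z : ℝ, F z =
      (1 - z ^ 2) * (2 * r ^ 2 * z ^ 2 + r * (6 - 2 * r ^ 2) * z + (6 - 4 * r ^ 2)) /
        (2 * (3 - r ^ 2))) :
    deriv (deriv F) (-1 / r) = 0 := by
  have hF_quartic : F = fun z => (-2 * r ^ 2 * z ^ 4 + (2 * r ^ 3 - 6 * r) * z ^ 3 +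
      (6 * r ^ 2 - 6) * z ^ 2 + (6 * r - 2 * r ^ 3) * z + (6 - 4 * r ^ 2)) / (2 * (3 - r ^ 2)) :=
    funext fun z => by rw [hF]; ring
  rw [hF_quartic, deriv_deriv_div_const, deriv_deriv_quartic]
  field_simp [hr0.ne']
  ring

/-- For `0 < r < 1`, the polynomial
`F(z) = (1-z²)(2r²z² + r(6-2r²)z + (6-4r²)) / (2(3-r²))` satisfies the extremality
condition `F''(-1/r) = 0`. -/
theorem extremal_condition_F (r : ℝ) (hr0 : 0 < r) (hr1 : r < 1) (F : ℝ → ℝ)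
    (hF : ∀ z : ℝ, F z =
      (1 - z ^ 2) * (2 * r ^ 2 * z ^ 2 + r * (6 - 2 * r ^ 2) * z + (6 - 4 * r ^ 2)) /
        (2 * (3 - r ^ 2))) :
    deriv (deriv F) (-1 / r) = 0 :=
  extremal_condition_F_general r hr0 F hF
end

section
/- Let p and q be relatively prime positive integers and let r be a real number with 0 < r < 1. Define h(z) = q(6 - 3r - 4r² + r³) + p(6 + 3r - 4r² - r³) + 2(3 - r²)(q(r - 1) + p(1 + r))z + r(p(3 + 2r - r²) - q(3 - 2r - r²))z², F(z) = (1 - z²)h(z) / (4pq(3 - r²)), and Θ(z) = F(z)/(1 + rz). Then: (i) Θ(z) > 0 for all z with -1 < z < 1; (ii) Θ(1) = 0 and Θ(-1) = 0; (iii) Θ has derivative 2/p at z = -1 and derivative -2/q at z = 1; and (iv) the second derivative of F vanishes at z = -1/r, i.e. F''(-1/r) = 0. (Hence every Kähler class on the orbifold (S_n, Δ_{pq}) admits an extremal Kähler metric.) -/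
/-!
The quadratic factor `h` splits as `h(z) = p (1 + z) L₁(z) + q (1 - z) L₂(z)` with `L₁, L₂` affine
and positive at `z = ±1` when `0 < r < 1`, so `h > 0` on `(-1, 1)`; this gives `Θ > 0`. Since
`F = (1 - z²) h / D`, with `D = 4pq(3 - r²)`, vanishes at `±1`, there
`Θ'(±1) = F'(±1) / (1 ± r) = ∓2 h(±1) / (D (1 ± r))`, and `h(±1)` is an explicit multiple of
`D (1 ± r)`. Finally `F` is a quartic, and `F''(-1/r) = 0` is a polynomial identity in `p, q, r`.
-/

/-- The quadratic `h` of the extremal profile. -/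
def extremalQuadratic (p q r z : ℝ) : ℝ :=
  q * (6 - 3 * r - 4 * r ^ 2 + r ^ 3) + p * (6 + 3 * r - 4 * r ^ 2 - r ^ 3) +
    2 * (3 - r ^ 2) * (q * (r - 1) + p * (1 + r)) * z +
    r * (p * (3 + 2 * r - r ^ 2) - q * (3 - 2 * r - r ^ 2)) * z ^ 2

lemma affine_pos_of_pos_of_pos {a b z : ℝ} (hm : 0 < b - a) (hp : 0 < a + b)
    (hz : -1 ≤ z) (hz' : z ≤ 1) : 0 < a * z + b := by
  rcases le_total 0 z with hz0 | hz0 <;> nlinarith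

lemma extremalQuadratic_eq (p q r z : ℝ) :
    extremalQuadratic p q r z =
      p * ((1 + z) * (r * (3 + 2 * r - r ^ 2) * z + (6 + 3 * r - 4 * r ^ 2 - r ^ 3))) +
      q * ((1 - z) * (r * (3 - 2 * r - r ^ 2) * z + (6 - 3 * r - 4 * r ^ 2 + r ^ 3))) := by
  unfold extremalQuadratic; ring

lemma extremalQuadratic_pos {p q r z : ℝ} (hp : 0 < p) (hq : 0 < q) (hr0 : 0 < r) (hr1 : r < 1)
    (hz : -1 < z) (hz' : z < 1) : 0 < extremalQuadratic p q r z := by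
  have h₁ : 0 < r * (3 + 2 * r - r ^ 2) * z + (6 + 3 * r - 4 * r ^ 2 - r ^ 3) :=
    affine_pos_of_pos_of_pos (by nlinarith) (by nlinarith) hz.le hz'.le
  have h₂ : 0 < r * (3 - 2 * r - r ^ 2) * z + (6 - 3 * r - 4 * r ^ 2 + r ^ 3) :=
    affine_pos_of_pos_of_pos (by nlinarith [mul_pos (sub_pos.2 hr1) (sub_pos.2 hr1)])
      (by nlinarith) hz.le hz'.le
  rw [extremalQuadratic_eq]
  have := mul_pos hp (mul_pos (by linarith : (0 : ℝ) < 1 + z) h₁)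
  have := mul_pos hq (mul_pos (by linarith : (0 : ℝ) < 1 - z) h₂)
  linarith

lemma extremalQuadratic_neg_one (p q r : ℝ) :
    extremalQuadratic p q r (-1) = 4 * q * (1 - r) * (3 - r ^ 2) := by
  unfold extremalQuadratic; ring

lemma extremalQuadratic_one (p q r : ℝ) :
    extremalQuadratic p q r 1 = 4 * p * (1 + r) * (3 - r ^ 2) := by
  unfold extremalQuadratic; ring

lemma differentiable_extremalQuadratic (p q r : ℝ) :
    Differentiable ℝ (extremalQuadratic p q r) := by
  unfold extremalQuadratic; fun_prop

lemma HasDerivAt.div_of_apply_eq_zero {f g : ℝ → ℝ} {f' g' a : ℝ} (hf : HasDerivAt f f' a)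
    (hg : HasDerivAt g g' a) (hfa : f a = 0) (hga : g a ≠ 0) :
    HasDerivAt (fun x => f x / g x) (f' / g a) a := by
  exact (hf.div hg hga).congr_deriv (by rw [hfa, zero_mul, sub_zero]; field_simp)

lemma hasDerivAt_one_sub_sq_mul_div {h : ℝ → ℝ} {a : ℝ} (hd : DifferentiableAt ℝ h a)
    (ha : a ^ 2 = 1) (c : ℝ) :
    HasDerivAt (fun z => (1 - z ^ 2) * h z / c) (-2 * a * h a / c) a := by
  have := ((((hasDerivAt_pow 2 a).const_sub 1).mul hd.hasDerivAt).div_const c)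
  exact this.congr_deriv (by rw [ha]; push_cast; ring)

lemma hasDerivAt_quartic (a₀ a₁ a₂ a₃ a₄ x : ℝ) :
    HasDerivAt (fun z => a₀ + a₁ * z + a₂ * z ^ 2 + a₃ * z ^ 3 + a₄ * z ^ 4)
      (a₁ + 2 * a₂ * x + 3 * a₃ * x ^ 2 + 4 * a₄ * x ^ 3) x := by
  have := ((((hasDerivAt_const x a₀).add ((hasDerivAt_id x).const_mul a₁)).add
    ((hasDerivAt_pow 2 x).const_mul a₂)).add
    ((hasDerivAt_pow 3 x).const_mul a₃)).add ((hasDerivAt_pow 4 x).const_mul a₄)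
  exact this.congr_deriv (by push_cast; ring)

lemma deriv_deriv_quartic_s16 (a₀ a₁ a₂ a₃ a₄ x : ℝ) :
    deriv (deriv fun z => a₀ + a₁ * z + a₂ * z ^ 2 + a₃ * z ^ 3 + a₄ * z ^ 4) x =
      2 * a₂ + 6 * a₃ * x + 12 * a₄ * x ^ 2 := by
  have hd : deriv (fun z => a₀ + a₁ * z + a₂ * z ^ 2 + a₃ * z ^ 3 + a₄ * z ^ 4) =
      fun z => a₁ + 2 * a₂ * z + 3 * a₃ * z ^ 2 + 4 * a₄ * z ^ 3 + 0 * z ^ 4 :=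
    funext fun z => by simpa using (hasDerivAt_quartic a₀ a₁ a₂ a₃ a₄ z).deriv
  rw [hd, (hasDerivAt_quartic _ _ _ _ _ x).deriv]
  ring

lemma deriv_deriv_one_sub_sq_mul_quadratic (A B C D x : ℝ) :
    deriv (deriv fun z => (1 - z ^ 2) * (A + B * z + C * z ^ 2) / D) x =
      (2 * (C - A) - 6 * B * x - 12 * C * x ^ 2) / D := by
  have hF : (fun z => (1 - z ^ 2) * (A + B * z + C * z ^ 2) / D) =
      fun z => A / D + B / D * z + (C - A) / D * z ^ 2 + -B / D * z ^ 3 + -C / D * z ^ 4 := by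
    funext z; ring
  rw [hF, deriv_deriv_quartic_s16]
  ring

theorem orbifold_extremal_profile_general (p q : ℕ) (hp : 0 < p) (hq : 0 < q)
    (r : ℝ) (hr0 : 0 < r) (hr1 : r < 1)
    (h F Θ : ℝ → ℝ)
    (hh : ∀ z : ℝ, h z =
      (q : ℝ) * (6 - 3 * r - 4 * r ^ 2 + r ^ 3) + (p : ℝ) * (6 + 3 * r - 4 * r ^ 2 - r ^ 3) +
        2 * (3 - r ^ 2) * ((q : ℝ) * (r - 1) + (p : ℝ) * (1 + r)) * z +
        r * ((p : ℝ) * (3 + 2 * r - r ^ 2) - (q : ℝ) * (3 - 2 * r - r ^ 2)) * z ^ 2)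
    (hFdef : ∀ z : ℝ, F z = (1 - z ^ 2) * h z / (4 * (p : ℝ) * (q : ℝ) * (3 - r ^ 2)))
    (hΘdef : ∀ z : ℝ, Θ z = F z / (1 + r * z)) :
    (∀ z : ℝ, -1 < z → z < 1 → 0 < Θ z) ∧
    Θ 1 = 0 ∧
    Θ (-1) = 0 ∧
    HasDerivAt Θ (2 / (p : ℝ)) (-1) ∧
    HasDerivAt Θ (-2 / (q : ℝ)) 1 ∧
    deriv (deriv F) (-1 / r) = 0 := by
  obtain rfl : h = extremalQuadratic p q r := funext hh
  obtain rfl : F = fun z => (1 - z ^ 2) * extremalQuadratic p q r z / (4 * p * q * (3 - r ^ 2)) :=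
    funext hFdef
  obtain rfl : Θ = fun z => (1 - z ^ 2) * extremalQuadratic p q r z / (4 * p * q * (3 - r ^ 2)) /
      (1 + r * z) := funext hΘdef
  have hP : (0 : ℝ) < p := by exact_mod_cast hp
  have hQ : (0 : ℝ) < q := by exact_mod_cast hq
  have h3r : (0 : ℝ) < 3 - r ^ 2 := by nlinarith
  have hboundary (a : ℝ) (ha : a ^ 2 = 1) (hra : 1 + r * a ≠ 0) :=
    (hasDerivAt_one_sub_sq_mul_div (differentiable_extremalQuadratic p q r a) ha
      (4 * p * q * (3 - r ^ 2))).div_of_apply_eq_zero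
      (((hasDerivAt_id' a).const_mul r).const_add 1) (by simp [ha]) hra
  refine ⟨fun z hz hz' => ?_, by simp, by simp, ?_, ?_, ?_⟩
  · have h1z : 0 < 1 - z ^ 2 := by nlinarith
    have h1rz : 0 < 1 + r * z := by nlinarith
    exact div_pos (div_pos (mul_pos h1z (extremalQuadratic_pos hP hQ hr0 hr1 hz hz'))
      (by positivity)) h1rz
  · convert hboundary (-1) (by norm_num) (by linarith) using 1
    rw [extremalQuadratic_neg_one, show 1 + r * -1 = 1 - r by ring]
    field_simp [(by linarith : (1 : ℝ) - r ≠ 0)]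
  · convert hboundary 1 (by norm_num) (by linarith) using 1
    rw [extremalQuadratic_one]
    field_simp [(by linarith : (1 : ℝ) + r ≠ 0)]
  · unfold extremalQuadratic
    rw [deriv_deriv_one_sub_sq_mul_quadratic]
    field_simp
    ring

/-- For relatively prime positive integers `p, q` and `0 < r < 1`, the extremal profile
`Θ(z) = F(z)/(1+rz)` with `F(z) = (1-z²)h(z)/(4pq(3-r²))` satisfies the orbifold boundary
conditions `Θ > 0` on `(-1,1)`, `Θ(±1) = 0`, `Θ'(-1) = 2/p`, `Θ'(1) = -2/q`, and the
extremality condition `F''(-1/r) = 0`. Hence every Kähler class on the orbifold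
`(S_n, Δ_{pq})` admits an extremal Kähler metric. -/
theorem orbifold_extremal_profile (p q : ℕ) (hp : 0 < p) (hq : 0 < q)
    (hpq : Nat.Coprime p q) (r : ℝ) (hr0 : 0 < r) (hr1 : r < 1)
    (h F Θ : ℝ → ℝ)
    (hh : ∀ z : ℝ, h z =
      (q : ℝ) * (6 - 3 * r - 4 * r ^ 2 + r ^ 3) + (p : ℝ) * (6 + 3 * r - 4 * r ^ 2 - r ^ 3) +
        2 * (3 - r ^ 2) * ((q : ℝ) * (r - 1) + (p : ℝ) * (1 + r)) * z +
        r * ((p : ℝ) * (3 + 2 * r - r ^ 2) - (q : ℝ) * (3 - 2 * r - r ^ 2)) * z ^ 2)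
    (hFdef : ∀ z : ℝ, F z = (1 - z ^ 2) * h z / (4 * (p : ℝ) * (q : ℝ) * (3 - r ^ 2)))
    (hΘdef : ∀ z : ℝ, Θ z = F z / (1 + r * z)) :
    (∀ z : ℝ, -1 < z → z < 1 → 0 < Θ z) ∧
    Θ 1 = 0 ∧
    Θ (-1) = 0 ∧
    HasDerivAt Θ (2 / (p : ℝ)) (-1) ∧
    HasDerivAt Θ (-2 / (q : ℝ)) 1 ∧
    deriv (deriv F) (-1 / r) = 0 :=
  orbifold_extremal_profile_general p q hp hq r hr0 hr1 h F Θ hh hFdef hΘdef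
end
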